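/- arXiv:1001.4051 — 2 statements merged into one kernel-verified Lean document; each statement's English description precedes it below -/
import Mathlib

section
/- Let a_1 ≤ c_1 < a_2 ≤ c_2 < … < a_m ≤ c_m be real numbers and set b_i = (a_i + c_i)/2. Define the 2×3m real matrices A with columns (a_i, 2a_i), (b_i, 2b_i), (c_i, 2c_i) for i = 1, …, m, and B with columns (0, a_i), (0, c_i), (0, b_i). Then the spectrum of the two-sided max-plus eigenproblem A ⊗ x = λ ⊗ B ⊗ x equals the union of the intervals [a_i, c_i], i = 1, …, m. In particular, every finite union of closed intervals and points on the real line is the spectrum of some two-sided max-plus eigenproblem. -/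
/-!
For `λ ∈ [a_i, c_i]` an eigenvector is supported on the three columns of block `i`, with entries
`0, u, u + λ - c_i` where `u = min (λ - b_i) 0`.

Conversely, let `x` be an eigenvector and `μ` its largest finite entry. Since row 0 of `B` vanishes,
row 0 gives a column `j₀` with `A₀ⱼ₀ + xⱼ₀ = λ + μ`, hence `A₀ⱼ₀ ≥ λ`. Feeding this into row 1
(where `A₁ = 2A₀`) shows that a column `j₁` attaining `(B ⊗ x)₁` has `B₁ⱼ₁ ≥ λ` and
`2A₀ⱼ₁ ≤ λ + B₁ⱼ₁`. Every column `j` of block `i` satisfies `B₁ⱼ ≤ c_i` and `a_i + B₁ⱼ ≤ 2A₀ⱼ`,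
so `λ` lies in the interval of the block of `j₁`.
-/

open Finset

/-- Max-plus matrix-vector product over `WithBot ℝ`. -/
def mpMul {n m : ℕ} (A : Fin n → Fin m → WithBot ℝ) (x : Fin m → WithBot ℝ) :
    Fin n → WithBot ℝ :=
  fun i => univ.sup fun j => A i j + x j

/-- The `2 × 3m` matrix `A` with columns `(a_i, 2a_i)`, `(b_i, 2b_i)`, `(c_i, 2c_i)`,
where `b_i = (a_i + c_i)/2`. -/
noncomputable def Amat {m : ℕ} (a c : Fin m → ℝ) : Fin 2 → Fin (3 * m) → ℝ :=
  fun k j =>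
    let i : Fin m := ⟨j.val / 3, by have := j.isLt; omega⟩
    let v : ℝ := if j.val % 3 = 0 then a i
      else if j.val % 3 = 1 then (a i + c i) / 2 else c i
    if k = 0 then v else 2 * v

/-- The `2 × 3m` matrix `B` with columns `(0, a_i)`, `(0, c_i)`, `(0, b_i)`. -/
noncomputable def Bmat {m : ℕ} (a c : Fin m → ℝ) : Fin 2 → Fin (3 * m) → ℝ :=
  fun k j =>
    let i : Fin m := ⟨j.val / 3, by have := j.isLt; omega⟩
    if k = 0 then 0
    else if j.val % 3 = 0 then a i
      else if j.val % 3 = 1 then c i else (a i + c i) / 2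

open Function Set

lemma extend_coe_bot_eq_coe_iff {κ ι : Type*} {e : κ → ι} (he : Injective e) (ξ : κ → ℝ)
    (j : ι) (ρ : ℝ) :
    extend e (fun s => (ξ s : WithBot ℝ)) ⊥ j = ρ ↔ ∃ s, e s = j ∧ ξ s = ρ := by
  by_cases hj : ∃ s, e s = j
  · obtain ⟨s, rfl⟩ := hj
    simp [he.extend_apply, he.eq_iff]
  · rw [extend_apply' _ _ _ hj]
    simpa using fun s hs => absurd ⟨s, hs⟩ hj

section MaxPlusRow

variable {κ ι : Type*} [Fintype ι]

lemma sup_coe_add_eq_coe_iff (g : ι → ℝ) (x : ι → WithBot ℝ) (t : ℝ) :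
    univ.sup (fun j => (g j : WithBot ℝ) + x j) = t ↔
      (∀ j (ρ : ℝ), x j = ρ → g j + ρ ≤ t) ∧ ∃ j, ∃ ρ : ℝ, x j = ρ ∧ g j + ρ = t := by
  constructor
  · intro h
    refine ⟨fun j ρ hj => ?_, ?_⟩
    · have := h ▸ le_sup (f := fun j => (g j : WithBot ℝ) + x j) (mem_univ j)
      rw [hj] at this
      exact_mod_cast this
    · have hne : (univ : Finset ι).Nonempty := by
        by_contra he
        rw [Finset.not_nonempty_iff_eq_empty.1 he, sup_empty] at h
        exact WithBot.bot_ne_coe h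
      obtain ⟨j, -, hj⟩ := exists_mem_eq_sup _ hne fun j => (g j : WithBot ℝ) + x j
      rw [h] at hj
      obtain ⟨ρ, hρ⟩ : ∃ ρ : ℝ, x j = ρ := by
        cases hxj : x j with
        | bot => simp [hxj] at hj
        | coe ρ => exact ⟨ρ, rfl⟩
      rw [hρ] at hj
      exact ⟨j, ρ, hρ, by exact_mod_cast hj.symm⟩
  · rintro ⟨hle, j₀, ρ₀, hj₀, ht⟩
    refine le_antisymm (Finset.sup_le fun j _ => ?_) ?_
    · cases hxj : x j with
      | bot => simp
      | coe ρ => exact_mod_cast hle j ρ hxj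
    · have := le_sup (f := fun j => (g j : WithBot ℝ) + x j) (mem_univ j₀)
      rwa [hj₀, ← WithBot.coe_add, ht] at this

lemma exists_sup_coe_add_eq_coe (g : ι → ℝ) {x : ι → WithBot ℝ} (hx : ∃ j, x j ≠ ⊥) :
    ∃ t : ℝ, univ.sup (fun j => (g j : WithBot ℝ) + x j) = t := by
  obtain ⟨j, hj⟩ := hx
  obtain ⟨ρ, hρ⟩ := WithBot.ne_bot_iff_exists.1 hj
  have hle : ((g j + ρ : ℝ) : WithBot ℝ) ≤ univ.sup fun j => (g j : WithBot ℝ) + x j := by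
    rw [WithBot.coe_add, hρ]
    exact le_sup (f := fun j => (g j : WithBot ℝ) + x j) (mem_univ j)
  obtain ⟨t, ht⟩ := WithBot.ne_bot_iff_exists.1 (ne_bot_of_le_ne_bot WithBot.coe_ne_bot hle)
  exact ⟨t, ht.symm⟩

lemma sup_coe_add_extend_eq_coe_iff {e : κ → ι} (he : Injective e) (g : ι → ℝ) (ξ : κ → ℝ)
    (t : ℝ) :
    univ.sup (fun j => (g j : WithBot ℝ) + extend e (fun s => (ξ s : WithBot ℝ)) ⊥ j) = t ↔
      IsGreatest (range fun s => g (e s) + ξ s) t := by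
  simp only [sup_coe_add_eq_coe_iff, extend_coe_bot_eq_coe_iff he, IsGreatest, mem_upperBounds,
    Set.mem_range, forall_exists_index, forall_apply_eq_imp_iff]
  constructor
  · rintro ⟨hle, j, ρ, ⟨s, rfl, rfl⟩, ht⟩
    exact ⟨⟨s, ht⟩, fun s => hle _ _ s ⟨rfl, rfl⟩⟩
  · rintro ⟨⟨s, ht⟩, hle⟩
    exact ⟨fun _ _ s ⟨hs, hρ⟩ => hs ▸ hρ ▸ hle s, _, _, ⟨s, rfl, rfl⟩, ht⟩

end MaxPlusRow

def maxPlusSpectrum {n p : ℕ} (A B : Fin n → Fin p → ℝ) : Set ℝ :=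
  {lam | ∃ x : Fin p → WithBot ℝ, (∃ j, x j ≠ ⊥) ∧
    mpMul (fun k j => (A k j : WithBot ℝ)) x =
      fun k => (lam : WithBot ℝ) + mpMul (fun k j => (B k j : WithBot ℝ)) x k}

theorem mem_maxPlusSpectrum_of_isGreatest {n p : ℕ} {κ : Type*} [Nonempty κ]
    {A B : Fin n → Fin p → ℝ} {e : κ → Fin p} (he : Injective e) (ξ : κ → ℝ) (lam : ℝ)
    (t : Fin n → ℝ) (hA : ∀ k, IsGreatest (range fun s => A k (e s) + ξ s) (lam + t k))
    (hB : ∀ k, IsGreatest (range fun s => B k (e s) + ξ s) (t k)) :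
    lam ∈ maxPlusSpectrum A B := by
  obtain ⟨s⟩ := ‹Nonempty κ›
  refine ⟨extend e (fun s => (ξ s : WithBot ℝ)) ⊥, ⟨e s, by simp [he.extend_apply]⟩, ?_⟩
  funext k
  simp only [mpMul, (sup_coe_add_extend_eq_coe_iff he _ _ _).2 (hA k),
    (sup_coe_add_extend_eq_coe_iff he _ _ _).2 (hB k), WithBot.coe_add]

theorem exists_mem_Icc_of_mem_maxPlusSpectrum {p : ℕ} {κ : Type*} {A B : Fin 2 → Fin p → ℝ}
    (l r : κ → ℝ) (hB₀ : ∀ j, B 0 j = 0) (hA₁ : ∀ j, A 1 j = 2 * A 0 j)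
    (hcol : ∀ j, ∃ i, B 1 j ≤ r i ∧ l i + B 1 j ≤ 2 * A 0 j) {lam : ℝ}
    (hlam : lam ∈ maxPlusSpectrum A B) : ∃ i, lam ∈ Icc (l i) (r i) := by
  obtain ⟨x, hx, heq⟩ := hlam
  have row (k : Fin 2) : ∃ s : ℝ, univ.sup (fun j => (B k j : WithBot ℝ) + x j) = s ∧
      univ.sup (fun j => (A k j : WithBot ℝ) + x j) = ↑(lam + s) := by
    obtain ⟨s, hs⟩ := exists_sup_coe_add_eq_coe (B k) hx
    refine ⟨s, hs, ?_⟩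
    have := congrFun heq k
    simp only [mpMul] at this
    rw [this, hs, WithBot.coe_add]
  obtain ⟨s₀, hB0, hA0⟩ := row 0
  obtain ⟨s₁, hB1, hA1⟩ := row 1
  obtain ⟨hx_le, -⟩ := (sup_coe_add_eq_coe_iff _ x _).1 hB0
  obtain ⟨-, j₀, ρ₀, hxj₀, hj₀⟩ := (sup_coe_add_eq_coe_iff _ x _).1 hA0
  obtain ⟨-, j₁, ρ₁, hxj₁, hj₁⟩ := (sup_coe_add_eq_coe_iff _ x _).1 hB1
  obtain ⟨hA1_le, -⟩ := (sup_coe_add_eq_coe_iff _ x _).1 hA1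
  obtain ⟨i, hBr, hlB⟩ := hcol j₁
  have hρ₀ := hx_le j₀ ρ₀ hxj₀
  have hρ₁ := hx_le j₁ ρ₁ hxj₁
  have hrow₀ := hA1_le j₀ ρ₀ hxj₀
  have hrow₁ := hA1_le j₁ ρ₁ hxj₁
  rw [hB₀] at hρ₀ hρ₁
  rw [hA₁] at hrow₀ hrow₁
  exact ⟨i, by linarith, by linarith⟩

def blockCol {m : ℕ} (i : Fin m) (s : Fin 3) : Fin (3 * m) :=
  ⟨3 * i + s, by omega⟩

lemma blockCol_injective {m : ℕ} (i : Fin m) : Injective (blockCol i) := fun s t h => by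
  simpa [blockCol, Fin.ext_iff] using h

lemma exists_blockCol_eq {m : ℕ} (j : Fin (3 * m)) : ∃ i s, blockCol i s = j :=
  ⟨⟨j / 3, by omega⟩, ⟨j % 3, by omega⟩, Fin.ext (by simp [blockCol]; omega)⟩

section Blocks

variable {m : ℕ} {a c : Fin m → ℝ}

lemma Amat_zero_blockCol (i : Fin m) (s : Fin 3) :
    Amat a c 0 (blockCol i s) = ![a i, (a i + c i) / 2, c i] s := by
  have hi : (⟨(3 * i + s : ℕ) / 3, by omega⟩ : Fin m) = i := Fin.ext (by simp; omega)
  fin_cases s <;> simp [Amat, blockCol, hi]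

lemma Amat_one_apply (j : Fin (3 * m)) : Amat a c 1 j = 2 * Amat a c 0 j := rfl

lemma Bmat_zero_apply (j : Fin (3 * m)) : Bmat a c 0 j = 0 := rfl

lemma Bmat_one_blockCol (i : Fin m) (s : Fin 3) :
    Bmat a c 1 (blockCol i s) = ![a i, c i, (a i + c i) / 2] s := by
  have hi : (⟨(3 * i + s : ℕ) / 3, by omega⟩ : Fin m) = i := Fin.ext (by simp; omega)
  fin_cases s <;> simp [Bmat, blockCol, hi]

lemma exists_Bmat_one_le_and_le_two_mul_Amat (hac : ∀ i, a i ≤ c i) (j : Fin (3 * m)) :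
    ∃ i, Bmat a c 1 j ≤ c i ∧ a i + Bmat a c 1 j ≤ 2 * Amat a c 0 j := by
  obtain ⟨i, s, rfl⟩ := exists_blockCol_eq j
  have := hac i
  refine ⟨i, ?_, ?_⟩ <;> fin_cases s <;> simp [Amat_zero_blockCol, Bmat_one_blockCol] <;> linarith

theorem Icc_subset_maxPlusSpectrum (i : Fin m) :
    Icc (a i) (c i) ⊆ maxPlusSpectrum (Amat a c) (Bmat a c) := by
  rintro lam ⟨hal, hlc⟩
  obtain ⟨u, hu₀, hu₁, hu₂, hattained⟩ : ∃ u : ℝ, u ≤ 0 ∧ (a i + c i) / 2 + u ≤ lam ∧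
      a i ≤ (a i + c i) / 2 + u ∧ ((a i + c i) / 2 + u = lam ∨ u = 0) := by
    rcases le_total lam ((a i + c i) / 2) with h | h
    · exact ⟨lam - (a i + c i) / 2, by linarith, by linarith, by linarith, .inl (by ring)⟩
    · exact ⟨0, le_rfl, by linarith, by linarith, .inr rfl⟩
  refine mem_maxPlusSpectrum_of_isGreatest (blockCol_injective i) ![0, u, u + lam - c i] lam
    ![0, c i + u] (fun k => ?_) (fun k => ?_) <;> fin_cases k
  all_goals refine ⟨?_, forall_mem_range.2 fun s => by
    fin_cases s <;> simp [Amat_zero_blockCol, Bmat_one_blockCol, Amat_one_apply, Bmat_zero_apply]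
      <;> linarith⟩
  · rcases hattained with h | h
    · exact ⟨1, by simpa [Amat_zero_blockCol] using h⟩
    · exact ⟨2, by simp [Amat_zero_blockCol, h]⟩
  · exact ⟨2, by simp [Amat_one_apply, Amat_zero_blockCol]; ring⟩
  · exact ⟨0, by simp [Bmat_zero_apply]⟩
  · exact ⟨1, by simp [Bmat_one_blockCol]⟩

end Blocks

theorem spectrum_eq_union_of_intervals_general {m : ℕ} (a c : Fin m → ℝ)
    (hac : ∀ i, a i ≤ c i) :
    {lam : ℝ | ∃ x : Fin (3 * m) → WithBot ℝ, (∃ j, x j ≠ ⊥) ∧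
        mpMul (fun k j => ((Amat a c k j : ℝ) : WithBot ℝ)) x =
          fun k => (lam : WithBot ℝ) +
            mpMul (fun k j => ((Bmat a c k j : ℝ) : WithBot ℝ)) x k} =
      ⋃ i : Fin m, Set.Icc (a i) (c i) := by
  change maxPlusSpectrum (Amat a c) (Bmat a c) = _
  refine Subset.antisymm (fun lam hlam => mem_iUnion.2 ?_)
    (iUnion_subset Icc_subset_maxPlusSpectrum)
  exact exists_mem_Icc_of_mem_maxPlusSpectrum a c Bmat_zero_apply Amat_one_apply
    (exists_Bmat_one_le_and_le_two_mul_Amat hac) hlam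

/-- For intervals `[a_i, c_i]` with `a_i ≤ c_i < a_{i+1}`, the spectrum of the
two-sided max-plus eigenproblem `A ⊗ x = λ ⊗ B ⊗ x` is `⋃ i [a_i, c_i]`:
every finite system of intervals and points is a spectrum. -/
theorem spectrum_eq_union_of_intervals {m : ℕ} (a c : Fin m → ℝ)
    (hac : ∀ i, a i ≤ c i) (hsep : ∀ i j : Fin m, i < j → c i < a j) :
    {lam : ℝ | ∃ x : Fin (3 * m) → WithBot ℝ, (∃ j, x j ≠ ⊥) ∧
        mpMul (fun k j => ((Amat a c k j : ℝ) : WithBot ℝ)) x =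
          fun k => (lam : WithBot ℝ) +
            mpMul (fun k j => ((Bmat a c k j : ℝ) : WithBot ℝ)) x k} =
      ⋃ i : Fin m, Set.Icc (a i) (c i) :=
  spectrum_eq_union_of_intervals_general a c hac
end

section
/- Let a_1 ≤ c_1 < a_2 ≤ c_2 < … < a_m ≤ c_m, b_i = (a_i+c_i)/2, and let A, B be the 2×3m matrices with columns (a_i, 2a_i), (b_i, 2b_i), (c_i, 2c_i) and (0, a_i), (0, c_i), (0, b_i) respectively. If c_k < λ < a_{k+1} for some 1 ≤ k ≤ m−1, then A ⊗ x = λ ⊗ B ⊗ x has no solution x with at least one finite entry (λ lies in a gap, hence is not in the spectrum). -/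
open Finset

def blk {m : ℕ} (j : Fin (3 * m)) : Fin m := ⟨j.val / 3, by have := j.isLt; omega⟩

lemma A0_def {m : ℕ} (a c : Fin m → ℝ) (j : Fin (3*m)) :
    Amat a c 0 j = if j.val % 3 = 0 then a (blk j)
      else if j.val % 3 = 1 then (a (blk j) + c (blk j)) / 2 else c (blk j) := rfl

lemma A1_def {m : ℕ} (a c : Fin m → ℝ) (j : Fin (3*m)) :
    Amat a c 1 j = 2 * Amat a c 0 j := by
  simp [Amat]

lemma B0_def {m : ℕ} (a c : Fin m → ℝ) (j : Fin (3*m)) :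
    Bmat a c 0 j = 0 := rfl

lemma B1_def {m : ℕ} (a c : Fin m → ℝ) (j : Fin (3*m)) :
    Bmat a c 1 j = if j.val % 3 = 0 then a (blk j)
      else if j.val % 3 = 1 then c (blk j) else (a (blk j) + c (blk j)) / 2 := rfl

lemma A0_ge {m : ℕ} (a c : Fin m → ℝ) (hac : ∀ i, a i ≤ c i) (j : Fin (3*m)) :
    a (blk j) ≤ Amat a c 0 j := by
  rw [A0_def]; have := hac (blk j); split_ifs <;> linarith

lemma A0_le {m : ℕ} (a c : Fin m → ℝ) (hac : ∀ i, a i ≤ c i) (j : Fin (3*m)) :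
    Amat a c 0 j ≤ c (blk j) := by
  rw [A0_def]; have := hac (blk j); split_ifs <;> linarith

lemma B1_le {m : ℕ} (a c : Fin m → ℝ) (hac : ∀ i, a i ≤ c i) (j : Fin (3*m)) :
    Bmat a c 1 j ≤ c (blk j) := by
  rw [B1_def]; have := hac (blk j); split_ifs <;> linarith

lemma key_ge {m : ℕ} (a c : Fin m → ℝ) (hac : ∀ i, a i ≤ c i) (j : Fin (3*m)) :
    a (blk j) ≤ 2 * Amat a c 0 j - Bmat a c 1 j := by
  rw [A0_def, B1_def]; have := hac (blk j); split_ifs <;> linarith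


/-- If `λ` lies in a gap `(c_k, a_{k+1})` between consecutive intervals, then
`A ⊗ x = λ ⊗ B ⊗ x` has no nontrivial solution. -/
theorem gap_not_in_spectrum {m : ℕ} (a c : Fin m → ℝ)
    (hac : ∀ i, a i ≤ c i) (hsep : ∀ i j : Fin m, i < j → c i < a j)
    (k : Fin m) (hk : k.val + 1 < m) (lam : ℝ)
    (h1 : c k < lam) (h2 : lam < a ⟨k.val + 1, hk⟩) :
    ¬ ∃ x : Fin (3 * m) → WithBot ℝ, (∃ j, x j ≠ ⊥) ∧
        mpMul (fun i j => ((Amat a c i j : ℝ) : WithBot ℝ)) x =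
          fun i => (lam : WithBot ℝ) +
            mpMul (fun i j => ((Bmat a c i j : ℝ) : WithBot ℝ)) x i := by
  rintro ⟨x, ⟨j0, hj0⟩, heq⟩
  have gap : ∀ i : Fin m, c i < lam ∨ lam < a i := by
    intro i
    rcases le_or_gt i.val k.val with h | h
    · left
      rcases eq_or_lt_of_le h with h' | h'
      · have : i = k := Fin.ext h'
        rw [this]; exact h1
      · have := hsep i k (by exact h')
        have := hac k
        linarith
    · right
      rcases eq_or_lt_of_le (Nat.succ_le_of_lt h) with h' | h'
      · have : (⟨k.val + 1, hk⟩ : Fin m) = i := Fin.ext h'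
        rw [← this]; exact h2
      · have := hsep ⟨k.val + 1, hk⟩ i (by exact h')
        have := hac (⟨k.val + 1, hk⟩ : Fin m)
        linarith
  have hne : (univ : Finset (Fin (3 * m))).Nonempty := ⟨j0, mem_univ j0⟩
  have eq0 := congrFun heq 0
  have eq1 := congrFun heq 1
  simp only [mpMul] at eq0 eq1
  have hB0 : (univ.sup fun j => ((Bmat a c 0 j : ℝ) : WithBot ℝ) + x j) = univ.sup x := by
    apply Finset.sup_congr rfl
    intro j _
    rw [B0_def]
    simp
  rw [hB0] at eq0
  have hsx : univ.sup x ≠ ⊥ := by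
    intro h
    exact hj0 (le_bot_iff.mp (h ▸ Finset.le_sup (mem_univ j0)))
  obtain ⟨M, hM⟩ := WithBot.ne_bot_iff_exists.mp hsx
  rw [← hM] at eq0
  obtain ⟨p, _, hp⟩ := Finset.exists_mem_eq_sup univ hne
    (fun j => ((Amat a c 0 j : ℝ) : WithBot ℝ) + x j)
  rw [hp] at eq0
  have hxp : x p ≠ ⊥ := by
    intro h
    rw [h, WithBot.add_bot] at eq0
    exact (WithBot.coe_ne_bot (a := lam + M)) (by
      rw [← WithBot.coe_add] at eq0; exact eq0.symm)
  obtain ⟨xp, hxpv⟩ := WithBot.ne_bot_iff_exists.mp hxp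
  rw [← hxpv, ← WithBot.coe_add, ← WithBot.coe_add] at eq0
  have eq0' : Amat a c 0 p + xp = lam + M := WithBot.coe_injective eq0
  have hxpM : xp ≤ M := by
    have := Finset.le_sup (f := x) (mem_univ p)
    rw [← hM, ← hxpv] at this
    exact_mod_cast this
  have hvp : lam < Amat a c 0 p := by
    have hge : lam ≤ Amat a c 0 p := by linarith
    rcases gap (blk p) with h | h
    · have := A0_le a c hac p; linarith
    · have := A0_ge a c hac p; linarith
  have hLHS : ((2 * lam + M : ℝ) : WithBot ℝ) <
      univ.sup fun j => ((Amat a c 1 j : ℝ) : WithBot ℝ) + x j := by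
    have hle := Finset.le_sup (f := fun j => ((Amat a c 1 j : ℝ) : WithBot ℝ) + x j)
      (mem_univ p)
    refine lt_of_lt_of_le ?_ hle
    show ((2 * lam + M : ℝ) : WithBot ℝ) < ((Amat a c 1 p : ℝ) : WithBot ℝ) + x p
    rw [← hxpv, ← WithBot.coe_add, WithBot.coe_lt_coe, A1_def]
    linarith
  rw [eq1] at hLHS
  have hsw : (univ.sup fun j => ((Bmat a c 1 j : ℝ) : WithBot ℝ) + x j) ≠ ⊥ := by
    intro h
    rw [h, WithBot.add_bot] at hLHS
    exact (not_lt_bot hLHS)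
  obtain ⟨N, hN⟩ := WithBot.ne_bot_iff_exists.mp hsw
  have hN0 : (univ.sup fun j => ((Bmat a c 1 j : ℝ) : WithBot ℝ) + x j) = ((N : ℝ) : WithBot ℝ) :=
    hN.symm
  rw [hN0, ← WithBot.coe_add, WithBot.coe_lt_coe] at hLHS
  obtain ⟨r, _, hr⟩ := Finset.exists_mem_eq_sup univ hne
    (fun j => ((Bmat a c 1 j : ℝ) : WithBot ℝ) + x j)
  have hrN : ((Bmat a c 1 r : ℝ) : WithBot ℝ) + x r = ((N : ℝ) : WithBot ℝ) := by
    rw [← hr, hN0]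
  have hxr : x r ≠ ⊥ := by
    intro h
    rw [h, WithBot.add_bot] at hrN
    exact WithBot.coe_ne_bot hrN.symm
  obtain ⟨xr, hxrv⟩ := WithBot.ne_bot_iff_exists.mp hxr
  rw [← hxrv, ← WithBot.coe_add] at hrN
  have hNr : Bmat a c 1 r + xr = N := WithBot.coe_injective hrN
  have hxrM : xr ≤ M := by
    have := Finset.le_sup (f := x) (mem_univ r)
    rw [← hM, ← hxrv] at this
    exact_mod_cast this
  have hwr : lam < Bmat a c 1 r := by linarith
  have har : lam < a (blk r) := by
    rcases gap (blk r) with h | h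
    · have := B1_le a c hac r; linarith
    · exact h
  have hle := Finset.le_sup (f := fun j => ((Amat a c 1 j : ℝ) : WithBot ℝ) + x j)
    (mem_univ r)
  rw [eq1, hN0] at hle
  have hterm : ((Amat a c 1 r : ℝ) : WithBot ℝ) + x r ≤
      (lam : WithBot ℝ) + ((N : ℝ) : WithBot ℝ) := hle
  rw [← hxrv, ← WithBot.coe_add, ← WithBot.coe_add, WithBot.coe_le_coe, A1_def] at hterm
  have := key_ge a c hac r
  linarith
end
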